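/- arXiv:0803.1876 — 3 statements merged into one kernel-verified Lean document; each statement's English description precedes it below -/
import Mathlib

section
/- Let (f, u) be a framed knot: f : ℝ → ℝ³ a C^∞ embedding of period L parametrized by arc length, and u : ℝ → ℝ³ a C^∞ map of period L with |u(s)| = 1 and u(s)·f'(s) = 0 for all s. Let P ∉ f([0,L]), r > 0, I = I_{P,r} the inversion, f̃ = I∘f, and let ũ(s) = dI_{f(s)}(u(s)) / |dI_{f(s)}(u(s))| be the normalized pushforward framing (which is a unit normal field along f̃ since I is conformal). Then Tw(f̃, ũ) ≡ −Tw(f, u) (mod ℤ), i.e. Tw(f̃, ũ) + Tw(f, u) ∈ ℤ. -/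
noncomputable section
open Real

/-- Euclidean 3-space. -/
abbrev E3 : Type := EuclideanSpace ℝ (Fin 3)

/-- The dot product of two vectors in `E3`. -/
def dot3 (u v : E3) : ℝ := u 0 * v 0 + u 1 * v 1 + u 2 * v 2

/-- The cross product of two vectors in `E3`. -/
def cross3 (u v : E3) : E3 :=
  (WithLp.equiv 2 (Fin 3 → ℝ)).symm
    ![u 1 * v 2 - u 2 * v 1, u 2 * v 0 - u 0 * v 2, u 0 * v 1 - u 1 * v 0]

/-- The determinant `det(u, v, w)` of three vectors in `E3`. -/
def det3 (u v w : E3) : ℝ := dot3 u (cross3 v w)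

/-- The writhe of a closed curve `g` of period `L`, given by the Gauss integral. -/
def writhe (g : ℝ → E3) (L : ℝ) : ℝ :=
  (1 / (4 * π)) * ∫ s in (0:ℝ)..L, ∫ t in (0:ℝ)..L,
    det3 (deriv g s) (deriv g t) (g s - g t) / ‖g s - g t‖ ^ 3

/-- The inversion in the sphere of center `P` and radius `r`. -/
def inv3 (P : E3) (r : ℝ) (x : E3) : E3 := P + (r ^ 2 / ‖x - P‖ ^ 2) • (x - P)

/-- The differential of the inversion `inv3 P r` at `x`, applied to `v`. -/
def dInv (P : E3) (r : ℝ) (x v : E3) : E3 :=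
  (r ^ 2 / ‖x - P‖ ^ 2) • (v - ((2 * dot3 (x - P) v) / ‖x - P‖ ^ 2) • (x - P))

/-- The total twist of a closed curve `g` of period `L` with unit normal framing `w`. -/
def twist (g w : ℝ → E3) (L : ℝ) : ℝ :=
  (1 / (2 * π)) * ∫ s in (0:ℝ)..L,
    dot3 (deriv w s) (cross3 ((‖deriv g s‖)⁻¹ • deriv g s) (w s))

/-- The principal normal `e₂ = f''/κ` of an arc-length parametrized curve. -/
def e2 (f : ℝ → E3) (s : ℝ) : E3 := (‖deriv (deriv f) s‖)⁻¹ • deriv (deriv f) s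

/-- The binormal `e₃ = e₁ × e₂` of an arc-length parametrized curve. -/
def e3 (f : ℝ → E3) (s : ℝ) : E3 := cross3 (deriv f s) (e2 f s)

/-- The torsion `τ = e₂'·e₃` of an arc-length parametrized curve. -/
def torsionArc (f : ℝ → E3) (s : ℝ) : ℝ := dot3 (deriv (e2 f) s) (e3 f s)

/-- The total torsion `Tω = (1/2π) ∫ τ` of an arc-length parametrized closed curve. -/
def totalTorsionArc (f : ℝ → E3) (L : ℝ) : ℝ :=
  (1 / (2 * π)) * ∫ s in (0:ℝ)..L, torsionArc f s

/-- The torsion `τ_g = det(g', g'', g''')/|g' × g''|²` of a regular curve. -/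
def torsionGen (g : ℝ → E3) (s : ℝ) : ℝ :=
  det3 (deriv g s) (deriv (deriv g) s) (deriv (deriv (deriv g)) s) /
    ‖cross3 (deriv g s) (deriv (deriv g) s)‖ ^ 2

/-- The total torsion `Tω = (1/2π) ∫ τ_g |g'|` of a regular closed curve. -/
def totalTorsionGen (g : ℝ → E3) (L : ℝ) : ℝ :=
  (1 / (2 * π)) * ∫ s in (0:ℝ)..L, torsionGen g s * ‖deriv g s‖

/-- The osculating circle at `s` of an arc-length parametrized curve with `κ(s) > 0`:
the circle of center `f(s) + (1/κ(s)) e₂(s)` and radius `1/κ(s)` in the plane through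
`f(s)` spanned by `e₁(s)` and `e₂(s)`. -/
def osculatingCircleArc (f : ℝ → E3) (s : ℝ) : Set E3 :=
  {y | (∃ a b : ℝ, y = f s + a • deriv f s + b • e2 f s) ∧
    ‖y - (f s + (‖deriv (deriv f) s‖)⁻¹ • e2 f s)‖ = (‖deriv (deriv f) s‖)⁻¹}

/-- The curvature tube of `f`: the union of all osculating circles. -/
def curvatureTube (f : ℝ → E3) : Set E3 := ⋃ s : ℝ, osculatingCircleArc f s


section BWAux

lemma dot3_eq_inner (a b : E3) : dot3 a b = inner ℝ a b := by
  simp [dot3, PiLp.inner_apply, RCLike.inner_apply, Fin.sum_univ_three, mul_comm]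

lemma dot3_comm (a b : E3) : dot3 a b = dot3 b a := by simp only [dot3]; ring

lemma refl_norm (W X : E3) (hX : ‖X‖ = 1) (hq : ‖W‖ ^ 2 ≠ 0) :
    ‖X - (2 * dot3 W X / ‖W‖ ^ 2) • W‖ = 1 := by
  have h2 : ‖X - (2 * dot3 W X / ‖W‖ ^ 2) • W‖ ^ 2 = 1 := by
    rw [← real_inner_self_eq_norm_sq]
    simp only [inner_sub_left, inner_sub_right, real_inner_smul_left, real_inner_smul_right,
      real_inner_self_eq_norm_sq, hX, dot3_eq_inner, real_inner_comm W X,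
      norm_smul, Real.norm_eq_abs, mul_pow, sq_abs]
    field_simp
    ring
  nlinarith [norm_nonneg (X - (2 * dot3 W X / ‖W‖ ^ 2) • W)]

set_option maxHeartbeats 2000000 in
set_option maxRecDepth 100000 in
lemma key_identity (W T U V : E3) {q : ℝ} (hq : dot3 W W = q) (hQ : q ≠ 0) :
    dot3 (V - (((dot3 W V + dot3 T U) * 2 * q - 2 * dot3 W U * (dot3 W T + dot3 T W)) / q ^ 2) • W
        - (2 * dot3 W U / q) • T)
      (cross3 (T - (2 * dot3 W T / q) • W) (U - (2 * dot3 W U / q) • W))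
    = - dot3 V (cross3 T U) - (2 * dot3 T U / q) * dot3 W (cross3 T U) := by
  simp only [dot3, cross3, WithLp.equiv_symm_apply, PiLp.toLp_apply, PiLp.sub_apply, PiLp.smul_apply,
    smul_eq_mul, Matrix.cons_val_zero, Matrix.cons_val_one, Matrix.head_cons,
    Matrix.cons_val_two, Matrix.tail_cons] at hq ⊢
  generalize W 0 = w0 at *; generalize W 1 = w1 at *; generalize W 2 = w2 at *
  generalize T 0 = t0 at *; generalize T 1 = t1 at *; generalize T 2 = t2 at *
  generalize U 0 = u0 at *; generalize U 1 = u1 at *; generalize U 2 = u2 at *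
  generalize V 0 = v0 at *; generalize V 1 = v1 at *; generalize V 2 = v2 at *
  subst hq
  have hQ' : w0 ^ 2 + w1 ^ 2 + w2 ^ 2 ≠ 0 := by convert hQ using 1; ring
  field_simp
  ring

lemma twist_pointwise (f u : ℝ → E3) (P : E3) (r : ℝ) (hr : 0 < r)
    (hfd : ∀ t, HasDerivAt f (deriv f t) t) (hud : ∀ t, HasDerivAt u (deriv u t) t)
    (hfP : ∀ t, f t ≠ P) (harc : ∀ t, ‖deriv f t‖ = 1) (hunit : ∀ t, ‖u t‖ = 1)
    (hnormal : ∀ t, dot3 (u t) (deriv f t) = 0) (s : ℝ) :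
    dot3 (deriv (fun t => (‖dInv P r (f t) (u t)‖)⁻¹ • dInv P r (f t) (u t)) s)
      (cross3 ((‖deriv (fun t => inv3 P r (f t)) s‖)⁻¹ • deriv (fun t => inv3 P r (f t)) s)
        ((‖dInv P r (f s) (u s)‖)⁻¹ • dInv P r (f s) (u s)))
    = - dot3 (deriv u s) (cross3 ((‖deriv f s‖)⁻¹ • deriv f s) (u s)) := by
  have hqpos : ∀ t, (0:ℝ) < ‖f t - P‖ ^ 2 := fun t => by
    have : f t - P ≠ 0 := sub_ne_zero.mpr (hfP t)
    exact pow_pos (norm_pos_iff.mpr this) 2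
  have hq0 : ∀ t, (‖f t - P‖ ^ 2 : ℝ) ≠ 0 := fun t => (hqpos t).ne'
  have hdinv_norm : ∀ t, ‖dInv P r (f t) (u t)‖ = r ^ 2 / ‖f t - P‖ ^ 2 := by
    intro t
    rw [dInv, norm_smul, refl_norm _ _ (hunit t) (hq0 t), mul_one, Real.norm_eq_abs,
      abs_of_pos (div_pos (pow_pos hr 2) (hqpos t))]
  have huni : (fun t => (‖dInv P r (f t) (u t)‖)⁻¹ • dInv P r (f t) (u t))
      = fun t => u t - (2 * dot3 (f t - P) (u t) / ‖f t - P‖ ^ 2) • (f t - P) := by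
    funext t
    rw [hdinv_norm t, dInv, smul_smul,
      inv_mul_cancel₀ (div_pos (pow_pos hr 2) (hqpos t)).ne', one_smul]
  have hw : ∀ t, HasDerivAt (fun x => f x - P) (deriv f t) t := fun t => (hfd t).sub_const P
  have hQd : ∀ t, HasDerivAt (fun x => ‖f x - P‖ ^ 2)
      ((inner ℝ (f t - P) (deriv f t) : ℝ) + inner ℝ (deriv f t) (f t - P)) t := by
    intro t
    simpa only [real_inner_self_eq_norm_sq] using (hw t).inner ℝ (hw t)
  have hmd : ∀ t, HasDerivAt (fun x => dot3 (f x - P) (u x))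
      ((inner ℝ (f t - P) (deriv u t) : ℝ) + inner ℝ (deriv f t) (u t)) t := by
    intro t
    simpa only [← dot3_eq_inner] using (hw t).inner ℝ (hud t)
  set W := f s - P with hW
  set T := deriv f s with hT
  set U := u s with hU
  set V := deriv u s with hV
  set q : ℝ := ‖f s - P‖ ^ 2 with hq
  have hc : HasDerivAt (fun t => r ^ 2 / ‖f t - P‖ ^ 2)
      ((0 * q - r ^ 2 * ((inner ℝ W T : ℝ) + inner ℝ T W)) / q ^ 2) s :=
    (hasDerivAt_const s (r ^ 2)).div (hQd s) (hq0 s)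
  have hft : HasDerivAt (fun t => inv3 P r (f t))
      ((r ^ 2 / q) • T + ((0 * q - r ^ 2 * ((inner ℝ W T : ℝ) + inner ℝ T W)) / q ^ 2) • W) s := by
    have := (hasDerivAt_const s P).add (hc.smul (hw s))
    simpa [inv3, add_comm, Pi.add_def, Pi.smul_def'] using this
  have hco : (0 * q - r ^ 2 * ((inner ℝ W T : ℝ) + inner ℝ T W)) / q ^ 2
      = -((r ^ 2 / q) * (2 * dot3 W T / q)) := by
    rw [dot3_eq_inner, real_inner_comm T W]
    field_simp
    ring
  have hD1 : (r ^ 2 / q) • T + ((0 * q - r ^ 2 * ((inner ℝ W T : ℝ) + inner ℝ T W)) / q ^ 2) • W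
      = (r ^ 2 / q) • (T - (2 * dot3 W T / q) • W) := by
    rw [hco]; module
  have hTnorm : ‖T‖ = 1 := harc s
  have hrq : (0:ℝ) < r ^ 2 / q := div_pos (pow_pos hr 2) (hqpos s)
  have hDnorm : ‖deriv (fun t => inv3 P r (f t)) s‖ = r ^ 2 / q := by
    rw [hft.deriv, hD1, norm_smul, refl_norm _ _ hTnorm (hq0 s), mul_one, Real.norm_eq_abs,
      abs_of_pos hrq]
  have htU : (‖deriv (fun t => inv3 P r (f t)) s‖)⁻¹ • deriv (fun t => inv3 P r (f t)) s
      = T - (2 * dot3 W T / q) • W := by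
    rw [hDnorm, hft.deriv, hD1, smul_smul, inv_mul_cancel₀ hrq.ne', one_smul]
  have huni_s : (‖dInv P r (f s) (u s)‖)⁻¹ • dInv P r (f s) (u s)
      = U - (2 * dot3 W U / q) • W := congrFun huni s
  have hσ : HasDerivAt (fun t => 2 * dot3 (f t - P) (u t) / ‖f t - P‖ ^ 2)
      ((2 * ((inner ℝ W V : ℝ) + inner ℝ T U) * q - 2 * dot3 W U * ((inner ℝ W T : ℝ) + inner ℝ T W))
        / q ^ 2) s := by
    have h := ((hmd s).const_mul 2).div (hQd s) (hq0 s)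
    exact h
  have hud2 : HasDerivAt
      (fun t => u t - (2 * dot3 (f t - P) (u t) / ‖f t - P‖ ^ 2) • (f t - P))
      (V - ((2 * dot3 W U / q) • T
        + ((2 * ((inner ℝ W V : ℝ) + inner ℝ T U) * q
            - 2 * dot3 W U * ((inner ℝ W T : ℝ) + inner ℝ T W)) / q ^ 2) • W)) s :=
    (hud s).sub (hσ.smul (hw s))
  have hderu : deriv (fun t => (‖dInv P r (f t) (u t)‖)⁻¹ • dInv P r (f t) (u t)) s
      = V - (((dot3 W V + dot3 T U) * 2 * q
          - 2 * dot3 W U * (dot3 W T + dot3 T W)) / q ^ 2) • W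
        - (2 * dot3 W U / q) • T := by
    rw [huni, hud2.deriv]
    simp only [← dot3_eq_inner]
    module
  have hWW : dot3 W W = q := by rw [dot3_eq_inner, real_inner_self_eq_norm_sq]
  have hTU : dot3 T U = 0 := by rw [dot3_comm]; exact hnormal s
  rw [hderu, htU, huni_s, key_identity W T U V hWW (hq0 s), hTU, hTnorm]
  simp

end BWAux

/-- Banchoff–White. The total twist of a framed knot changes sign
modulo `ℤ` under an inversion: with `f̃ = I ∘ f` and `ũ` the normalized pushforward
framing `dI(u)/|dI(u)|`, we have `Tw(f̃, ũ) + Tw(f, u) ∈ ℤ`. -/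
theorem twist_inversion
    (f u : ℝ → E3) (L : ℝ) (hL : 0 < L)
    (hf : ContDiff ℝ (⊤ : ℕ∞) f) (hper : Function.Periodic f L)
    (harc : ∀ s, ‖deriv f s‖ = 1) (hinj : Set.InjOn f (Set.Ico 0 L))
    (hu : ContDiff ℝ (⊤ : ℕ∞) u) (huper : Function.Periodic u L)
    (hunit : ∀ s, ‖u s‖ = 1) (hnormal : ∀ s, dot3 (u s) (deriv f s) = 0)
    (P : E3) (hP : P ∉ f '' Set.Icc 0 L) (r : ℝ) (hr : 0 < r) :
    ∃ k : ℤ,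
      twist (fun s => inv3 P r (f s))
          (fun s => (‖dInv P r (f s) (u s)‖)⁻¹ • dInv P r (f s) (u s)) L
        + twist f u L = (k : ℝ) := by
  refine ⟨0, ?_⟩
  have hfd : ∀ t, HasDerivAt f (deriv f t) t := fun t => (hf.differentiable (by simp) t).hasDerivAt
  have hud : ∀ t, HasDerivAt u (deriv u t) t := fun t => (hu.differentiable (by simp) t).hasDerivAt
  have hfP : ∀ t, f t ≠ P := by
    intro t ht
    obtain ⟨y, hy, hye⟩ := hper.exists_mem_Ico₀ hL t
    exact hP ⟨y, Set.Ico_subset_Icc_self hy, by rw [← hye]; exact ht⟩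
  have hpt := twist_pointwise f u P r hr hfd hud hfP harc hunit hnormal
  simp only [twist]
  rw [intervalIntegral.integral_congr
      (g := fun s => -(dot3 (deriv u s) (cross3 ((‖deriv f s‖)⁻¹ • deriv f s) (u s))))
      (fun s _ => hpt s),
    intervalIntegral.integral_neg]
  push_cast
  ring
end
end

section
/- Let f : ℝ → ℝ³ be a C^∞ embedding of period L parametrized by arc length with curvature κ(s) = |f''(s)| > 0 for all s, and let P ∈ ℝ³ lie outside the curvature tube of f (the union over s of the osculating circles of f). For each s let Σ(s) be the unique sphere containing the osculating circle at s and passing through P, with center c(s) and radius ρ(s), so that c(s) = f(s) + (1/κ(s)) e₂(s) + μ(s) e₃(s) for a unique smooth μ(s) ∈ ℝ, ρ(s) = |f(s) − c(s)|, and |P − c(s)| = ρ(s). Fix s₀, assume P does not lie on the tangent line {f(s₀) + t f'(s₀) : t ∈ ℝ}, and let Γ(s₀, P) be the unique circle passing through P and f(s₀) that is tangent to the direction f'(s₀) at f(s₀). Then for every point y ∈ Γ(s₀, P): (d/ds)[ |y − c(s)|² − ρ(s)² ] evaluated at s = s₀ equals 0. (Infinitesimally, the sphere Σ(s) rotates around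 the circle Γ(s₀, P) at s = s₀.) -/
noncomputable section
open Real

/-- The unique circle through `P` and `A` tangent at `A` to the direction `v`
(`v` a unit vector, `P` not on the line `A + ℝv`). Its center is
`A + (|P−A|²/(2|n|²)) n` where `n` is the component of `P − A` orthogonal to `v`,
and it lies in the plane through `A` spanned by `v` and `n`. -/
def tangentCircle (A v P : E3) : Set E3 :=
  let n : E3 := (P - A) - dot3 (P - A) v • v
  let c₀ : E3 := A + (‖P - A‖ ^ 2 / (2 * ‖n‖ ^ 2)) • n
  {y | (∃ a b : ℝ, y = A + a • v + b • n) ∧ ‖y - c₀‖ = ‖A - c₀‖}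

lemma dot3_inner (u v : E3) : dot3 u v = inner ℝ u v := by
  simp [dot3, PiLp.inner_apply, Fin.sum_univ_three, RCLike.inner_apply, conj_trivial]; ring

lemma dot3_cross_left (u v : E3) : dot3 (cross3 u v) u = 0 := by
  simp [dot3, cross3]; ring

lemma dot3_cross_smul (u v : E3) (a : ℝ) : dot3 (cross3 u (a • v)) v = 0 := by
  simp [dot3, cross3, PiLp.smul_apply, smul_eq_mul]; ring

lemma hasDerivAt_inner_self {g : ℝ → E3} {g' : E3} {x : ℝ} (h : HasDerivAt g g' x) :
    HasDerivAt (fun t => (inner ℝ (g t) (g t) : ℝ)) (2 * inner ℝ (g x) g') x := by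
  have h2 := h.inner ℝ h
  rw [real_inner_comm (g x) g'] at h2
  rw [two_mul]; exact h2

/-- Lemma 1. Infinitesimally, the sphere `Σ(s)` through the
osculating circle of `f` at `s` and the point `P` rotates around the circle
`Γ(s₀, P)` at `s = s₀`: for every `y` on that circle, the derivative at `s₀` of
`s ↦ |y − c(s)|² − ρ(s)²` vanishes. -/
theorem sphere_rotates_around_tangent_circle
    (f : ℝ → E3) (L : ℝ) (hL : 0 < L)
    (hf : ContDiff ℝ (⊤ : ℕ∞) f) (hper : Function.Periodic f L)
    (harc : ∀ s, ‖deriv f s‖ = 1) (hinj : Set.InjOn f (Set.Ico 0 L))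
    (hκ : ∀ s, ‖deriv (deriv f) s‖ > 0)
    (P : E3) (hP : P ∉ curvatureTube f)
    (c : ℝ → E3) (ρ μ : ℝ → ℝ)
    (hc : ContDiff ℝ (⊤ : ℕ∞) c) (hμ : ContDiff ℝ (⊤ : ℕ∞) μ)
    (hcdef : ∀ s, c s = f s + (‖deriv (deriv f) s‖)⁻¹ • e2 f s + μ s • e3 f s)
    (hρdef : ∀ s, ρ s = ‖f s - c s‖)
    (hPc : ∀ s, ‖P - c s‖ = ρ s)
    (s₀ : ℝ) (hPt : ∀ t : ℝ, P ≠ f s₀ + t • deriv f s₀)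
    (y : E3) (hy : y ∈ tangentCircle (f s₀) (deriv f s₀) P) :
    deriv (fun s => ‖y - c s‖ ^ 2 - ρ s ^ 2) s₀ = 0 := by
  have hfi : ContDiff ℝ ((⊤:ℕ∞) : WithTop ℕ∞) f := hf.of_le (by simp)
  have hdf : Differentiable ℝ (deriv f) :=
    (contDiff_infty_iff_deriv.mp hfi).2.differentiable (by norm_num)
  have hfd : ∀ s, HasDerivAt f (deriv f s) s := fun s => (hf.differentiable (by simp) s).hasDerivAt
  have hf2d : ∀ s, HasDerivAt (deriv f) (deriv (deriv f) s) s := fun s => (hdf s).hasDerivAt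
  have hcd : ∀ s, HasDerivAt c (deriv c s) s := fun s => (hc.differentiable (by simp) s).hasDerivAt
  -- ⟪f', f''⟫ = 0
  have T1 : ∀ s, (inner ℝ (deriv f s) (deriv (deriv f) s) : ℝ) = 0 := by
    intro s
    have h2 : HasDerivAt (fun t => (inner ℝ (deriv f t) (deriv f t) : ℝ))
        (2 * inner ℝ (deriv f s) (deriv (deriv f) s)) s := hasDerivAt_inner_self (hf2d s)
    have h1 : (fun t => (inner ℝ (deriv f t) (deriv f t) : ℝ)) = fun _ => 1 := by
      funext t; rw [real_inner_self_eq_norm_sq, harc t]; norm_num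
    rw [h1] at h2
    have h0 := h2.unique (hasDerivAt_const s (1:ℝ))
    linarith
  have hcf : ∀ s, c s - f s = (‖deriv (deriv f) s‖)⁻¹ • e2 f s + μ s • e3 f s := by
    intro s; rw [hcdef s]; abel
  have orth : ∀ s, (inner ℝ (c s - f s) (deriv f s) : ℝ) = 0 := by
    intro s
    rw [hcf s, inner_add_left, real_inner_smul_left, real_inner_smul_left]
    have h2 : (inner ℝ (e2 f s) (deriv f s) : ℝ) = 0 := by
      rw [e2, real_inner_smul_left, real_inner_comm, T1 s, mul_zero]
    have h3 : (inner ℝ (e3 f s) (deriv f s) : ℝ) = 0 := by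
      rw [← dot3_inner, e3, dot3_cross_left]
    rw [h2, h3]; ring
  have orth2 : ∀ s, (inner ℝ (c s - f s) (deriv (deriv f) s) : ℝ) = 1 := by
    intro s
    rw [hcf s, inner_add_left, real_inner_smul_left, real_inner_smul_left]
    have h2 : (inner ℝ (e2 f s) (deriv (deriv f) s) : ℝ) = ‖deriv (deriv f) s‖ := by
      rw [e2, real_inner_smul_left, real_inner_self_eq_norm_sq, sq,
        inv_mul_cancel_left₀ (hκ s).ne']
    have h3 : (inner ℝ (e3 f s) (deriv (deriv f) s) : ℝ) = 0 := by
      rw [← dot3_inner, e3, e2, dot3_cross_smul]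
    rw [h2, h3, mul_zero, add_zero, inv_mul_cancel₀ (hκ s).ne']
  -- ⟪c', f'⟫ = 0 at s₀
  have T2 : (inner ℝ (deriv c s₀) (deriv f s₀) : ℝ) = 0 := by
    have h2 : HasDerivAt (fun t => (inner ℝ (c t - f t) (deriv f t) : ℝ))
        ((inner ℝ (c s₀ - f s₀) (deriv (deriv f) s₀) : ℝ)
          + inner ℝ (deriv c s₀ - deriv f s₀) (deriv f s₀)) s₀ :=
      ((hcd s₀).sub (hfd s₀)).inner ℝ (hf2d s₀)
    have h1 : (fun t => (inner ℝ (c t - f t) (deriv f t) : ℝ)) = fun _ => 0 := funext orth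
    rw [h1] at h2
    have h0 := h2.unique (hasDerivAt_const s₀ (0:ℝ))
    rw [orth2 s₀, inner_sub_left, real_inner_self_eq_norm_sq, harc s₀] at h0
    rw [one_pow] at h0
    linarith
  have hβ : (inner ℝ (f s₀ - c s₀) (deriv f s₀) : ℝ) = 0 := by
    rw [show f s₀ - c s₀ = -(c s₀ - f s₀) by abel, inner_neg_left, orth s₀, neg_zero]
  -- ⟪P - f s₀, c'⟫ = 0
  have T3 : (inner ℝ (P - f s₀) (deriv c s₀) : ℝ) = 0 := by
    have h2 : HasDerivAt
        (fun t => (inner ℝ (P - c t) (P - c t) : ℝ) - inner ℝ (f t - c t) (f t - c t))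
        ((2 * inner ℝ (P - c s₀) ((0:E3) - deriv c s₀))
          - (2 * inner ℝ (f s₀ - c s₀) (deriv f s₀ - deriv c s₀))) s₀ :=
      (hasDerivAt_inner_self ((hasDerivAt_const s₀ P).sub (hcd s₀))).sub
        (hasDerivAt_inner_self ((hfd s₀).sub (hcd s₀)))
    have h1 : (fun t => (inner ℝ (P - c t) (P - c t) : ℝ) - inner ℝ (f t - c t) (f t - c t))
        = fun _ => 0 := by
      funext t
      rw [real_inner_self_eq_norm_sq, real_inner_self_eq_norm_sq, hPc t, ← hρdef t, sub_self]
    rw [h1] at h2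
    have h0 := h2.unique (hasDerivAt_const s₀ (0:ℝ))
    have e1 : (inner ℝ (P - f s₀) (deriv c s₀) : ℝ)
        = (inner ℝ (P - c s₀) (deriv c s₀) : ℝ) - inner ℝ (f s₀ - c s₀) (deriv c s₀) := by
      rw [← inner_sub_left]; congr 1; abel
    rw [e1]
    simp only [zero_sub, inner_neg_right, inner_sub_right] at h0
    linarith [hβ]
  -- y on the tangent circle
  obtain ⟨⟨a, b, hyeq⟩, -⟩ := hy
  have hT2' : (inner ℝ (deriv f s₀) (deriv c s₀) : ℝ) = 0 := by
    rw [real_inner_comm]; exact T2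
  have hyP : (inner ℝ (y - P) (deriv c s₀) : ℝ) = 0 := by
    have hyf : y - f s₀ = a • deriv f s₀
        + b • ((P - f s₀) - dot3 (P - f s₀) (deriv f s₀) • deriv f s₀) := by
      rw [hyeq]; abel
    have h4 : (inner ℝ (y - f s₀) (deriv c s₀) : ℝ) = 0 := by
      rw [hyf, inner_add_left, real_inner_smul_left, real_inner_smul_left,
        inner_sub_left, real_inner_smul_left, hT2', T3]
      ring
    have hsplit : y - P = (y - f s₀) - (P - f s₀) := by abel
    rw [hsplit, inner_sub_left, h4, T3, sub_zero]
  have hfun : (fun s => ‖y - c s‖ ^ 2 - ρ s ^ 2)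
      = fun s => (inner ℝ (y - c s) (y - c s) : ℝ) - inner ℝ (P - c s) (P - c s) := by
    funext s
    rw [real_inner_self_eq_norm_sq, real_inner_self_eq_norm_sq, hPc s]
  rw [hfun]
  have h2 : HasDerivAt
      (fun s => (inner ℝ (y - c s) (y - c s) : ℝ) - inner ℝ (P - c s) (P - c s))
      ((2 * inner ℝ (y - c s₀) ((0:E3) - deriv c s₀))
        - (2 * inner ℝ (P - c s₀) ((0:E3) - deriv c s₀))) s₀ :=
    (hasDerivAt_inner_self ((hasDerivAt_const s₀ y).sub (hcd s₀))).sub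
      (hasDerivAt_inner_self ((hasDerivAt_const s₀ P).sub (hcd s₀)))
  rw [h2.deriv]
  have e2' : (inner ℝ (y - P) (deriv c s₀) : ℝ)
      = (inner ℝ (y - c s₀) (deriv c s₀) : ℝ) - inner ℝ (P - c s₀) (deriv c s₀) := by
    rw [← inner_sub_left]; congr 1; abel
  simp only [zero_sub, inner_neg_right]
  rw [e2'] at hyP
  linarith
end
end

section
/- Let f : ℝ → ℝ³ be a C^∞ curve of period L parametrized by arc length with curvature κ(s) = |f''(s)| > 0 for all s, with Frenet frame e₁ = f', e₂ = f''/κ, e₃ = e₁ × e₂ and torsion τ = e₂'·e₃. Define w : ℝ × ℝ → S² by w(s,t) = (cos t) f'(s) + (sin t) e₂(s). Then for all s and t, det(w(s,t), ∂w/∂s(s,t), ∂w/∂t(s,t)) = −τ(s) sin t. Consequently, the signed area of the region swept on S² by the semicircles {w(s,t) : 0 ≤ t ≤ π} as s runs over [0,L] is ∫₀^L ∫₀^π det(w, ∂_s w, ∂_t w) dt ds = −2 ∫₀^L τ(s) ds. -/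
noncomputable section
open Real

lemma key_det3 (u v w : E3) (κ c s : ℝ) (h : c^2 + s^2 = 1) :
    det3 (c•u + s•v) (c•(κ•v) + s•w) ((-s)•u + c•v) = -(dot3 w (cross3 u v)) * s := by
  have : det3 (c•u + s•v) (c•(κ•v) + s•w) ((-s)•u + c•v)
      = -((c^2+s^2) * s) * dot3 w (cross3 u v) := by
    simp [det3, dot3, cross3, WithLp.equiv_symm_apply, PiLp.toLp_apply, PiLp.add_apply, PiLp.smul_apply,
      Matrix.cons_val_zero, Matrix.cons_val_one, Matrix.head_cons, smul_eq_mul]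
    ring
  rw [this, h]; ring

/-- For `w(s,t) = (cos t) f'(s) + (sin t) e₂(s)` on the unit sphere,
`det(w, ∂_s w, ∂_t w) = −τ(s) sin t`; consequently the signed area swept by the
semicircles `{w(s,t) : 0 ≤ t ≤ π}` as `s` runs over `[0, L]` is `−2 ∫₀^L τ ds`. -/
theorem semicircle_swept_area
    (f : ℝ → E3) (L : ℝ) (hL : 0 < L)
    (hf : ContDiff ℝ (⊤ : ℕ∞) f) (hper : Function.Periodic f L)
    (harc : ∀ s, ‖deriv f s‖ = 1)
    (hκ : ∀ s, ‖deriv (deriv f) s‖ > 0) :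
    (∀ s t : ℝ,
      det3 (cos t • deriv f s + sin t • e2 f s)
        (deriv (fun s' => cos t • deriv f s' + sin t • e2 f s') s)
        (deriv (fun t' => cos t' • deriv f s + sin t' • e2 f s) t)
      = -(torsionArc f s) * sin t) ∧
    (∫ s in (0:ℝ)..L, ∫ t in (0:ℝ)..π,
      det3 (cos t • deriv f s + sin t • e2 f s)
        (deriv (fun s' => cos t • deriv f s' + sin t • e2 f s') s)
        (deriv (fun t' => cos t' • deriv f s + sin t' • e2 f s) t))
      = -2 * ∫ s in (0:ℝ)..L, torsionArc f s := by
  have h1 : ContDiff ℝ (↑(⊤:ℕ∞)) (deriv f) := (contDiff_infty_iff_deriv.mp (hf.of_le (by simp))).2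
  have h2 : ContDiff ℝ (↑(⊤:ℕ∞)) (deriv (deriv f)) := (contDiff_infty_iff_deriv.mp h1).2
  have hdf : Differentiable ℝ (deriv f) := h1.differentiable (by norm_num)
  have hddf : Differentiable ℝ (deriv (deriv f)) := h2.differentiable (by norm_num)
  have hne : ∀ s', deriv (deriv f) s' ≠ 0 := fun s' => by
    intro h; have := hκ s'; rw [h] at this; simp at this
  have he2 : Differentiable ℝ (e2 f) := fun s' =>
    (((hddf s').norm ℝ (hne s')).inv (ne_of_gt (hκ s'))).smul (hddf s')
  have main : ∀ s t : ℝ,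
      det3 (cos t • deriv f s + sin t • e2 f s)
        (deriv (fun s' => cos t • deriv f s' + sin t • e2 f s') s)
        (deriv (fun t' => cos t' • deriv f s + sin t' • e2 f s) t)
      = -(torsionArc f s) * sin t := by
    intro s t
    have d1 : HasDerivAt (fun s' => cos t • deriv f s' + sin t • e2 f s')
        (cos t • deriv (deriv f) s + sin t • deriv (e2 f) s) s :=
      (((hdf s).hasDerivAt).const_smul (cos t)).add (((he2 s).hasDerivAt).const_smul (sin t))
    have d2 : HasDerivAt (fun t' => cos t' • deriv f s + sin t' • e2 f s)
        ((-sin t) • deriv f s + cos t • e2 f s) t :=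
      ((Real.hasDerivAt_cos t).smul_const _).add ((Real.hasDerivAt_sin t).smul_const _)
    rw [d1.deriv, d2.deriv]
    have hκe2 : deriv (deriv f) s = ‖deriv (deriv f) s‖ • e2 f s := by
      rw [e2, smul_smul, mul_inv_cancel₀ (ne_of_gt (hκ s)), one_smul]
    rw [hκe2, key_det3 _ _ _ _ _ _ (cos_sq_add_sin_sq t)]
    rfl
  refine ⟨main, ?_⟩
  have inner : ∀ s : ℝ, (∫ t in (0:ℝ)..π,
      det3 (cos t • deriv f s + sin t • e2 f s)
        (deriv (fun s' => cos t • deriv f s' + sin t • e2 f s') s)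
        (deriv (fun t' => cos t' • deriv f s + sin t' • e2 f s) t))
      = -2 * torsionArc f s := by
    intro s
    rw [intervalIntegral.integral_congr (g := fun t => -(torsionArc f s) * sin t)
      (fun t _ => main s t), intervalIntegral.integral_const_mul, integral_sin]
    simp; ring
  rw [intervalIntegral.integral_congr (g := fun s => -2 * torsionArc f s)
    (fun s _ => inner s), intervalIntegral.integral_const_mul]
end
end
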